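/- arXiv:2407.07109 — 2 statements merged into one kernel-verified Lean document; each statement's English description precedes it below -/
import Mathlib

section
/- Let θ_n = arctan(√(F_n / F_{n+1})). Then the limit of θ_n as n → ∞ equals arctan(√(1/φ)), and moreover arctan(√(1/φ)) = √(1/φ) · ∑_{n=0}^{∞} (L_n − √5 · F_n) / (2(2n+1)), where L_n are the Lucas numbers. -/
open Real Filter

/-- The golden ratio φ = (1+√5)/2. -/
noncomputable def phi : ℝ := (1 + Real.sqrt 5) / 2

/-- The Lucas numbers: L 0 = 2, L 1 = 1, L (n+2) = L (n+1) + L n. -/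
def lucas : ℕ → ℕ
  | 0 => 2
  | 1 => 1
  | n + 2 => lucas (n + 1) + lucas n

/-- The acute angle of the n-th triangle of the Fibonacci–Theodorus spiral
opposite the leg √(F n): θ n = arctan (√(F n / F (n+1))). -/
noncomputable def theta (n : ℕ) : ℝ :=
  Real.arctan (Real.sqrt ((Nat.fib n : ℝ) / (Nat.fib (n + 1) : ℝ)))

/-!
The ratio `F n / F (n+1)` tends to `φ⁻¹ = -ψ`, and `arctan ∘ sqrt` is continuous, which gives the
limit. For the series, Gregory's series at `x = √y` with `y = φ⁻¹ < 1` has terms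
`(-1)ⁿ x^(2n+1) / (2n+1) = x (-y)ⁿ / (2n+1) = x ψⁿ / (2n+1)`, and
`ψⁿ = (Lₙ - √5 Fₙ) / 2` by the Binet formulas.
-/

open scoped goldenRatio Topology

theorem one_div_phi : 1 / phi = -ψ := by
  rw [one_div, show phi = φ from rfl, inv_goldenRatio]

theorem coe_lucas_eq (n : ℕ) : (lucas n : ℝ) = φ ^ n + ψ ^ n := by
  induction n using Nat.twoStepInduction with
  | zero => norm_num [lucas]
  | one => simp [lucas, goldenRatio, goldenConj]
  | more n ih₁ ih₂ =>
    have hφ : φ ^ (n + 2) = φ ^ n * (φ + 1) := by rw [← goldenRatio_sq]; ring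
    have hψ : ψ ^ (n + 2) = ψ ^ n * (ψ + 1) := by rw [← goldenConj_sq]; ring
    rw [lucas, Nat.cast_add, ih₁, ih₂, hφ, hψ]
    ring

theorem lucas_sub_sqrt_five_mul_fib (n : ℕ) :
    (lucas n : ℝ) - √5 * Nat.fib n = 2 * ψ ^ n := by
  rw [coe_lucas_eq, coe_fib_eq, mul_div_cancel₀ _ (by positivity)]
  ring

theorem Real.hasSum_arctan_sqrt {y : ℝ} (hy₀ : 0 ≤ y) (hy₁ : y < 1) :
    HasSum (fun n : ℕ => √y * ((-y) ^ n / (2 * n + 1))) (arctan √y) := by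
  have hx : ‖√y‖ < 1 := by
    rwa [norm_of_nonneg (sqrt_nonneg y), sqrt_lt' one_pos, one_pow]
  convert Real.hasSum_arctan hx using 2 with n
  rw [pow_succ, pow_mul, sq_sqrt hy₀, neg_pow]
  push_cast
  ring

theorem tendsto_theta : Tendsto theta atTop (𝓝 (arctan √(1 / phi))) := by
  rw [one_div_phi]
  exact ((continuous_arctan.comp continuous_sqrt).tendsto _).comp tendsto_fib_div_fib_succ_atTop

theorem angle_tendsto_arctan_and_series :
    Filter.Tendsto theta Filter.atTop (nhds (Real.arctan (Real.sqrt (1 / phi)))) ∧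
      Real.arctan (Real.sqrt (1 / phi)) =
        Real.sqrt (1 / phi) *
          ∑' n : ℕ, ((lucas n : ℝ) - Real.sqrt 5 * (Nat.fib n : ℝ)) / (2 * (2 * (n : ℝ) + 1)) := by
  refine ⟨tendsto_theta, ?_⟩
  have hy₀ : 0 ≤ -ψ := neg_nonneg.2 goldenConj_neg.le
  have hy₁ : -ψ < 1 := by linarith [neg_one_lt_goldenConj]
  rw [one_div_phi, ← (hasSum_arctan_sqrt hy₀ hy₁).tsum_eq, tsum_mul_left]
  congr 1
  refine tsum_congr fun n => ?_
  rw [lucas_sub_sqrt_five_mul_fib, neg_neg, mul_div_mul_left _ _ two_ne_zero]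
end

section
/- Let θ_n = arctan(√(F_n / F_{n+1})). Then for every positive integer n, 2π < ∑_{i=0}^{9} θ_{n+i} < 20π/9; that is, ten consecutive triangles of the Fibonacci–Theodorus spiral always turn through more than one full revolution (360°) but less than 400°. -/
open Real Finset

/-! For n ≥ 1 the ratio F_n / F_{n+1} is at most 1, at least 1/2, at most 2/3 once n ≥ 2 and at
least 3/5 once n ≥ 3. So ten consecutive angles from n ≥ 1 on add up to at least
2 arctan √(1/2) + 8 arctan √(3/5) > 2π and at most π/4 + 9 arctan √(2/3) < 20π/9. These three
arctangents are estimated by partial sums of the Gregory series: the remainder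
arctan x - ∑_{j<N} (-1)^j x^(2j+1)/(2j+1) vanishes at 0 and has derivative (-x²)^N / (1 + x²), so
for x ≥ 0 the partial sum lies below arctan x when N is even and above it when N is odd. -/

noncomputable def arctanPartialSum (N : ℕ) (x : ℝ) : ℝ :=
  ∑ j ∈ range N, (-1) ^ j * x ^ (2 * j + 1) / (2 * j + 1)

namespace arctanPartialSum

@[simp]
theorem apply_zero (N : ℕ) : arctanPartialSum N 0 = 0 := by
  simp [arctanPartialSum]

theorem hasDerivAt (N : ℕ) (x : ℝ) :
    HasDerivAt (arctanPartialSum N) (∑ j ∈ range N, (-x ^ 2) ^ j) x := by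
  refine HasDerivAt.fun_sum fun j _ => ?_
  refine (((hasDerivAt_pow (2 * j + 1) x).const_mul ((-1 : ℝ) ^ j)).div_const
    (2 * j + 1 : ℝ)).congr_deriv ?_
  rw [neg_pow (x ^ 2), ← pow_mul, Nat.add_sub_cancel]
  push_cast
  field_simp

theorem hasDerivAt_arctan_sub (N : ℕ) (x : ℝ) :
    HasDerivAt (fun y => arctan y - arctanPartialSum N y) ((-x ^ 2) ^ N / (1 + x ^ 2)) x := by
  refine ((Real.hasDerivAt_arctan x).sub (hasDerivAt N x)).congr_deriv ?_
  have hgeom := geom_sum_mul_neg (-x ^ 2) N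
  rw [sub_neg_eq_add, add_comm] at hgeom
  field_simp
  linarith

theorem le_arctan {N : ℕ} (hN : Even N) {x : ℝ} (hx : 0 ≤ x) :
    arctanPartialSum N x ≤ arctan x := by
  have hmono : Monotone fun y => arctan y - arctanPartialSum N y :=
    monotone_of_deriv_nonneg (fun y => (hasDerivAt_arctan_sub N y).differentiableAt)
      fun y => by rw [(hasDerivAt_arctan_sub N y).deriv, hN.neg_pow]; positivity
  simpa using hmono hx

theorem arctan_le {N : ℕ} (hN : Odd N) {x : ℝ} (hx : 0 ≤ x) :
    arctan x ≤ arctanPartialSum N x := by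
  have hanti : Antitone fun y => arctan y - arctanPartialSum N y :=
    antitone_of_deriv_nonpos (fun y => (hasDerivAt_arctan_sub N y).differentiableAt)
      fun y => by
        rw [(hasDerivAt_arctan_sub N y).deriv, hN.neg_pow, neg_div]
        exact neg_nonpos.mpr (by positivity)
  simpa using hanti hx

theorem sqrt_eq (N : ℕ) {q : ℝ} (hq : 0 ≤ q) :
    arctanPartialSum N √q = √q * ∑ j ∈ range N, (-q) ^ j / (2 * j + 1) := by
  rw [arctanPartialSum, mul_sum]
  refine sum_congr rfl fun j _ => ?_
  rw [pow_succ, pow_mul, sq_sqrt hq, neg_pow q]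
  ring

theorem le_arctan_sqrt {N : ℕ} (hN : Even N) {q s : ℝ} (hsq : s ^ 2 ≤ q)
    (hsum : 0 ≤ ∑ j ∈ range N, (-q) ^ j / (2 * j + 1)) :
    s * ∑ j ∈ range N, (-q) ^ j / (2 * j + 1) ≤ arctan √q := by
  have hq : 0 ≤ q := (sq_nonneg s).trans hsq
  calc s * ∑ j ∈ range N, (-q) ^ j / (2 * j + 1)
      ≤ √q * ∑ j ∈ range N, (-q) ^ j / (2 * j + 1) := by
        gcongr
        exact Real.le_sqrt_of_sq_le hsq
    _ = arctanPartialSum N √q := (sqrt_eq N hq).symm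
    _ ≤ arctan √q := le_arctan hN (sqrt_nonneg q)

theorem arctan_sqrt_le {N : ℕ} (hN : Odd N) {q s : ℝ} (hq : 0 ≤ q) (hs : 0 ≤ s)
    (hsq : q ≤ s ^ 2) (hsum : 0 ≤ ∑ j ∈ range N, (-q) ^ j / (2 * j + 1)) :
    arctan √q ≤ s * ∑ j ∈ range N, (-q) ^ j / (2 * j + 1) :=
  calc arctan √q ≤ arctanPartialSum N √q := arctan_le hN (sqrt_nonneg q)
    _ = √q * ∑ j ∈ range N, (-q) ^ j / (2 * j + 1) := sqrt_eq N hq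
    _ ≤ s * ∑ j ∈ range N, (-q) ^ j / (2 * j + 1) := by
        gcongr
        exact (Real.sqrt_le_left hs).mpr hsq

end arctanPartialSum

open arctanPartialSum

theorem three_fifths_le_arctan_sqrt_half : 3 / 5 ≤ arctan √(1 / 2) :=
  le_trans (by norm_num [sum_range_succ])
    (le_arctan_sqrt (N := 4) (s := 7 / 10) (by decide) (by norm_num)
      (by norm_num [sum_range_succ]))

theorem thirteen_twentieths_le_arctan_sqrt_three_fifths : 13 / 20 ≤ arctan √(3 / 5) :=
  le_trans (by norm_num [sum_range_succ])
    (le_arctan_sqrt (N := 4) (s := 774 / 1000) (by decide) (by norm_num)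
      (by norm_num [sum_range_succ]))

theorem arctan_sqrt_two_thirds_le : arctan √(2 / 3) ≤ 11 / 16 :=
  le_trans
    (arctan_sqrt_le (N := 7) (s := 8165 / 10000) (by decide) (by norm_num) (by norm_num)
      (by norm_num) (by norm_num [sum_range_succ]))
    (by norm_num [sum_range_succ])

theorem Nat.fib_succ_le_two_mul_fib {k : ℕ} (hk : 1 ≤ k) : fib (k + 1) ≤ 2 * fib k := by
  obtain ⟨m, rfl⟩ := Nat.exists_eq_add_of_le' hk
  show fib (m + 2) ≤ 2 * fib (m + 1)
  have h : fib (m + 2) = fib m + fib (m + 1) := Nat.fib_add_two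
  have := Nat.fib_le_fib_succ (n := m)
  omega

theorem Nat.three_mul_fib_le_two_mul_fib_succ {k : ℕ} (hk : 2 ≤ k) :
    3 * fib k ≤ 2 * fib (k + 1) := by
  obtain ⟨m, rfl⟩ := Nat.exists_eq_add_of_le' hk
  show 3 * fib (m + 2) ≤ 2 * fib (m + 3)
  have h₂ : fib (m + 2) = fib m + fib (m + 1) := Nat.fib_add_two
  have h₃ : fib (m + 3) = fib (m + 1) + fib (m + 2) := Nat.fib_add_two
  have := Nat.fib_le_fib_succ (n := m)
  omega

theorem Nat.three_mul_fib_succ_le_five_mul_fib {k : ℕ} (hk : 3 ≤ k) :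
    3 * fib (k + 1) ≤ 5 * fib k := by
  obtain ⟨m, rfl⟩ := Nat.exists_eq_add_of_le' hk
  show 3 * fib (m + 4) ≤ 5 * fib (m + 3)
  have h₄ : fib (m + 4) = fib (m + 2) + fib (m + 3) := Nat.fib_add_two
  have h₃ : fib (m + 3) = fib (m + 1) + fib (m + 2) := Nat.fib_add_two
  have : 3 * fib (m + 2) ≤ 2 * fib (m + 3) := Nat.three_mul_fib_le_two_mul_fib_succ (by omega)
  omega

open Nat in
theorem theta_le_arctan_sqrt {k : ℕ} {q : ℝ} (h : (fib k : ℝ) ≤ q * fib (k + 1)) :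
    theta k ≤ arctan √q :=
  arctan_strictMono.monotone <| sqrt_le_sqrt <|
    (div_le_iff₀ (by exact_mod_cast fib_pos.mpr k.succ_pos)).mpr h

open Nat in
theorem arctan_sqrt_le_theta {k : ℕ} {q : ℝ} (h : q * fib (k + 1) ≤ fib k) :
    arctan √q ≤ theta k :=
  arctan_strictMono.monotone <| sqrt_le_sqrt <|
    (le_div_iff₀ (by exact_mod_cast fib_pos.mpr k.succ_pos)).mpr h

theorem theta_le_pi_div_four (k : ℕ) : theta k ≤ π / 4 := by
  rw [← arctan_one, ← sqrt_one]
  exact theta_le_arctan_sqrt (by simpa using Nat.mono_cast (α := ℝ) Nat.fib_le_fib_succ)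

theorem theta_le_arctan_sqrt_two_thirds {k : ℕ} (hk : 2 ≤ k) : theta k ≤ arctan √(2 / 3) := by
  have h : ((3 * Nat.fib k : ℕ) : ℝ) ≤ (2 * Nat.fib (k + 1) : ℕ) :=
    Nat.mono_cast (Nat.three_mul_fib_le_two_mul_fib_succ hk)
  push_cast at h
  exact theta_le_arctan_sqrt (by linarith)

theorem arctan_sqrt_half_le_theta {k : ℕ} (hk : 1 ≤ k) : arctan √(1 / 2) ≤ theta k := by
  have h : (Nat.fib (k + 1) : ℝ) ≤ (2 * Nat.fib k : ℕ) :=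
    Nat.mono_cast (Nat.fib_succ_le_two_mul_fib hk)
  push_cast at h
  exact arctan_sqrt_le_theta (by linarith)

theorem arctan_sqrt_three_fifths_le_theta {k : ℕ} (hk : 3 ≤ k) :
    arctan √(3 / 5) ≤ theta k := by
  have h : ((3 * Nat.fib (k + 1) : ℕ) : ℝ) ≤ (5 * Nat.fib k : ℕ) :=
    Nat.mono_cast (Nat.three_mul_fib_succ_le_five_mul_fib hk)
  push_cast at h
  exact arctan_sqrt_le_theta (by linarith)

theorem le_sum_range_ten_theta {n : ℕ} (hn : 1 ≤ n) :
    32 / 5 ≤ ∑ i ∈ range 10, theta (n + i) := by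
  rw [sum_range_succ', sum_range_succ']
  have hfirst : 3 / 5 ≤ theta (n + 0) :=
    three_fifths_le_arctan_sqrt_half.trans (arctan_sqrt_half_le_theta hn)
  have hsecond : 3 / 5 ≤ theta (n + (0 + 1)) :=
    three_fifths_le_arctan_sqrt_half.trans (arctan_sqrt_half_le_theta (by omega))
  have hrest : 8 • (13 / 20 : ℝ) ≤ ∑ i ∈ range 8, theta (n + (i + 1 + 1)) := by
    simpa using card_nsmul_le_sum (range 8) _ _ fun i _ =>
      thirteen_twentieths_le_arctan_sqrt_three_fifths.trans
        (arctan_sqrt_three_fifths_le_theta (by omega))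
  rw [nsmul_eq_mul] at hrest
  linarith

theorem sum_range_ten_theta_le {n : ℕ} (hn : 1 ≤ n) :
    ∑ i ∈ range 10, theta (n + i) ≤ π / 4 + 99 / 16 := by
  rw [sum_range_succ']
  have hrest : ∑ i ∈ range 9, theta (n + (i + 1)) ≤ 9 • (11 / 16 : ℝ) := by
    simpa using sum_le_card_nsmul (range 9) _ _ fun i _ =>
      (theta_le_arctan_sqrt_two_thirds (by omega)).trans arctan_sqrt_two_thirds_le
  rw [nsmul_eq_mul] at hrest
  linarith [theta_le_pi_div_four (n + 0)]

/-- Ten consecutive triangles of the Fibonacci–Theodorus spiral always turn through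
more than 360° but less than 400°. -/
theorem ten_triangles_one_winding :
    ∀ n : ℕ, 0 < n →
      2 * Real.pi < ∑ i ∈ Finset.range 10, theta (n + i) ∧
        ∑ i ∈ Finset.range 10, theta (n + i) < 20 * Real.pi / 9 := by
  intro n hn
  have hπ := Real.pi_gt_d2
  exact ⟨by linarith [le_sum_range_ten_theta hn, Real.pi_lt_d2],
    by linarith [sum_range_ten_theta_le hn]⟩
end
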